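/- Let X be a finite T₀-space and let A ⊆ X. Then the collection Ω(X,A) = {W ⊆ X : W is a dbp–retract of X and A ⊆ W} is closed under binary intersections. In particular, Ω(X,A) has a minimum element with respect to set inclusion, and the intersection of any two dbp–retracts of X is a dbp–retract of X. -/

import Mathlib

open unitInterval

set_option autoImplicit false

universe u v

/-- The specialization preorder: `x ≤ y` iff every open set containing `y` contains `x`. -/
def specLE {X : Type*} [TopologicalSpace X] (x y : X) : Prop :=
  ∀ U : Set X, IsOpen U → y ∈ U → x ∈ U

/-- A continuous map `i : A → X` is a (Hurewicz) cofibration iff it has the homotopy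
extension property with respect to all topological spaces. -/
def IsCofibration {A : Type*} {X : Type*} [TopologicalSpace A] [TopologicalSpace X]
    (i : C(A, X)) : Prop :=
  ∀ (Z : Type v) [TopologicalSpace Z] (f : C(X, Z)) (H : C(A × I, Z)),
    (∀ a, H (a, 0) = f (i a)) →
    ∃ G : C(X × I, Z),
      (∀ x, G (x, 0) = f x) ∧ ∀ a t, G (i a, t) = H (a, t)

/-- `x` is a down beat point of the subspace `S`:
the set of points of `S` strictly below `x` has a maximum. -/
def IsDownBeatPoint {X : Type*} [TopologicalSpace X] (S : Set X) (x : X) : Prop :=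
  x ∈ S ∧ ∃ m ∈ S, m ≠ x ∧ specLE m x ∧
    ∀ z ∈ S, z ≠ x → specLE z x → specLE z m

/-- `T` is a dbp–retract of `S`: `T` is obtained from `S` by successively
removing down beat points. -/
inductive IsDbpRetract {X : Type*} [TopologicalSpace X] : Set X → Set X → Prop
  | refl (S : Set X) : IsDbpRetract S S
  | step {S T : Set X} (x : X) (hx : IsDownBeatPoint S x)
      (h : IsDbpRetract (S \ {x}) T) : IsDbpRetract S T

/-- The minimal open set containing `x` (in a finite space): the intersection of all
open sets containing `x`. -/
def minOpen {X : Type*} [TopologicalSpace X] (x : X) : Set X :=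
  ⋂₀ {U : Set X | IsOpen U ∧ x ∈ U}

/-
A subspace `W ⊆ S` of a finite T₀-space is a dbp–retract of `S` exactly when every point of `S`
has a greatest point of `W` below it; equivalently, the inclusion `W ↪ S` has a monotone right
adjoint `r ≤ id`. Removing a down beat point `x` has this property (send `x` to the maximum below
it), and the property composes; conversely, a point of `S \ W` that is minimal in `S \ W` is a
down beat point of `S`, with the greatest point of `W` below it as the maximum.

For two such subspaces `B, C` of `S`, the greatest point of `B ∩ C` below `a` is found by
well-founded recursion: go down to the greatest `b ∈ B` below `a`, then to the greatest `c ∈ C`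
below `b`; either `c = a ∈ B ∩ C`, or `c` is strictly below `a` and every point of `B ∩ C`
below `a` is already below `c`. A finite family of sets closed under `∩` then has its
intersection as least element.
-/

open Set

section

variable {X : Type*} [TopologicalSpace X]

theorem specLE_iff_specializes {x y : X} : specLE x y ↔ x ⤳ y :=
  specializes_iff_forall_open.symm

theorem wellFounded_specializes_and_ne [T0Space X] [Finite X] :
    WellFounded (fun x y : X => x ⤳ y ∧ x ≠ y) := by
  have : IsTrans X (fun x y => x ⤳ y ∧ x ≠ y) :=
    ⟨fun _ _ _ ⟨hab, hne⟩ ⟨hbc, _⟩ =>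
      ⟨hab.trans hbc, fun hac => hne (hab.antisymm (hac ▸ hbc)).eq⟩⟩
  have : Std.Irrefl (fun x y : X => x ⤳ y ∧ x ≠ y) := ⟨fun _ h => h.2 rfl⟩
  exact Finite.wellFounded_of_trans_of_irrefl _

theorem IsDbpRetract.subset {S T : Set X} (h : IsDbpRetract S T) : T ⊆ S := by
  induction h with
  | refl S => exact subset_rfl
  | step x _ _ ih => exact ih.trans sdiff_subset

def HasGreatestBelow (S W : Set X) : Prop :=
  ∀ a ∈ S, ∃ m ∈ W, m ⤳ a ∧ ∀ w ∈ W, w ⤳ a → w ⤳ m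

theorem hasGreatestBelow_refl (S : Set X) : HasGreatestBelow S S :=
  fun a ha => ⟨a, ha, specializes_rfl, fun _ _ hw => hw⟩

theorem HasGreatestBelow.mono {S T W : Set X} (h : HasGreatestBelow S W) (hTS : T ⊆ S) :
    HasGreatestBelow T W :=
  fun a ha => h a (hTS ha)

theorem HasGreatestBelow.trans {S T W : Set X} (hST : HasGreatestBelow S T)
    (hTW : HasGreatestBelow T W) (hWT : W ⊆ T) : HasGreatestBelow S W := by
  intro a ha
  obtain ⟨t, htT, hta, ht_max⟩ := hST a ha
  obtain ⟨m, hmW, hmt, hm_max⟩ := hTW t htT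
  exact ⟨m, hmW, hmt.trans hta, fun w hw hwa => hm_max w hw (ht_max w (hWT hw) hwa)⟩

theorem IsDownBeatPoint.hasGreatestBelow_diff {S : Set X} {x : X} (hx : IsDownBeatPoint S x) :
    HasGreatestBelow S (S \ {x}) := by
  obtain ⟨-, m, hmS, hmx, hm_le, hm_max⟩ := hx
  simp only [specLE_iff_specializes] at hm_le hm_max
  intro a ha
  by_cases hax : a = x
  · subst hax
    exact ⟨m, ⟨hmS, hmx⟩, hm_le, fun w hw hwa => hm_max w hw.1 hw.2 hwa⟩
  · exact ⟨a, ⟨ha, hax⟩, specializes_rfl, fun _ _ hw => hw⟩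

theorem IsDbpRetract.hasGreatestBelow {S W : Set X} (h : IsDbpRetract S W) :
    HasGreatestBelow S W := by
  induction h with
  | refl S => exact hasGreatestBelow_refl S
  | step x hx hW ih => exact hx.hasGreatestBelow_diff.trans ih hW.subset

theorem isDownBeatPoint_of_minimal {S W : Set X} (hW : HasGreatestBelow S W) (hWS : W ⊆ S)
    {x : X} (hx : x ∈ S \ W) (hx_min : ∀ z ∈ S \ W, ¬(z ⤳ x ∧ z ≠ x)) :
    IsDownBeatPoint S x := by
  obtain ⟨m, hmW, hmx, hm_max⟩ := hW x hx.1
  refine ⟨hx.1, m, hWS hmW, fun hm => hx.2 (hm ▸ hmW), specLE_iff_specializes.2 hmx,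
    fun z hzS hzx hzle => ?_⟩
  rw [specLE_iff_specializes] at hzle ⊢
  by_cases hzW : z ∈ W
  · exact hm_max z hzW hzle
  · exact absurd ⟨hzle, hzx⟩ (hx_min z ⟨hzS, hzW⟩)

theorem HasGreatestBelow.isDbpRetract [T0Space X] [Finite X] {S W : Set X}
    (hW : HasGreatestBelow S W) (hWS : W ⊆ S) : IsDbpRetract S W := by
  induction hn : (S \ W).ncard generalizing S with
  | zero =>
    have hSW : S ⊆ W := sdiff_eq_empty.1 ((ncard_eq_zero (toFinite _)).1 hn)
    exact hSW.antisymm hWS ▸ .refl S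
  | succ n ih =>
    obtain ⟨x, hx, hx_min⟩ := wellFounded_specializes_and_ne.has_min (S \ W)
      (nonempty_of_ncard_ne_zero (hn ▸ n.succ_ne_zero))
    refine .step x (isDownBeatPoint_of_minimal hW hWS hx hx_min)
      (ih (hW.mono sdiff_subset) (subset_sdiff_singleton hWS hx.2) ?_)
    rw [sdiff_sdiff_comm, ncard_sdiff_singleton_of_mem hx, hn, Nat.add_sub_cancel]

theorem HasGreatestBelow.inter [T0Space X] [Finite X] {S B C : Set X}
    (hB : HasGreatestBelow S B) (hC : HasGreatestBelow S C) (hBS : B ⊆ S) (hCS : C ⊆ S) :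
    HasGreatestBelow S (B ∩ C) := by
  intro a
  induction a using (wellFounded_specializes_and_ne (X := X)).induction with
  | _ a ih =>
    intro ha
    obtain ⟨b, hbB, hba, hb_max⟩ := hB a ha
    obtain ⟨c, hcC, hcb, hc_max⟩ := hC b (hBS hbB)
    by_cases hca : c = a
    · subst hca
      have hbc : b = c := (hba.antisymm hcb).eq
      exact ⟨c, ⟨hbc ▸ hbB, hcC⟩, specializes_rfl, fun _ _ hw => hw⟩
    · obtain ⟨m, hm, hmc, hm_max⟩ := ih c ⟨hcb.trans hba, hca⟩ (hCS hcC)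
      exact ⟨m, hm, hmc.trans (hcb.trans hba),
        fun w hw hwa => hm_max w hw (hc_max w hw.2 (hb_max w hw.1 hwa))⟩

theorem IsDbpRetract.inter [T0Space X] [Finite X] {S B C : Set X}
    (hB : IsDbpRetract S B) (hC : IsDbpRetract S C) : IsDbpRetract S (B ∩ C) :=
  (hB.hasGreatestBelow.inter hC.hasGreatestBelow hB.subset hC.subset).isDbpRetract
    (inter_subset_left.trans hB.subset)

end

theorem InfClosed.isLeast_sInf {α : Type*} [CompleteLattice α] {s : Set α} (hs : InfClosed s)
    (hfin : s.Finite) (hne : s.Nonempty) : IsLeast s (sInf s) :=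
  ⟨hs.sInf_mem_of_nonempty hfin hne subset_rfl, fun _ => sInf_le⟩

/-- Let `X` be a finite T₀-space and `A ⊆ X`. The collection
`Ω(X,A)` of dbp–retracts of `X` containing `A` is closed under binary intersections;
in particular it has a minimum element for inclusion, and the intersection of any two
dbp–retracts of `X` is a dbp–retract of `X`. -/
theorem Omega_inter_closed_and_has_min
    {X : Type u} [TopologicalSpace X] [Finite X] [T0Space X] (A : Set X) :
    (∀ W₁ W₂ : Set X,
      IsDbpRetract (Set.univ : Set X) W₁ → A ⊆ W₁ →
      IsDbpRetract (Set.univ : Set X) W₂ → A ⊆ W₂ →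
      IsDbpRetract (Set.univ : Set X) (W₁ ∩ W₂) ∧ A ⊆ W₁ ∩ W₂) ∧
    (∃ M : Set X, IsDbpRetract (Set.univ : Set X) M ∧ A ⊆ M ∧
      ∀ W : Set X, IsDbpRetract (Set.univ : Set X) W → A ⊆ W → M ⊆ W) ∧
    (∀ B C : Set X, IsDbpRetract (Set.univ : Set X) B →
      IsDbpRetract (Set.univ : Set X) C →
      IsDbpRetract (Set.univ : Set X) (B ∩ C)) := by
  set Ω : Set (Set X) := {W | IsDbpRetract univ W ∧ A ⊆ W}
  have hΩ : InfClosed Ω := fun _ h₁ _ h₂ => ⟨h₁.1.inter h₂.1, subset_inter h₁.2 h₂.2⟩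
  obtain ⟨⟨hM, hAM⟩, hM_least⟩ :=
    hΩ.isLeast_sInf (toFinite Ω) ⟨univ, .refl univ, subset_univ A⟩
  exact ⟨fun _ _ h₁ hA₁ h₂ hA₂ => hΩ ⟨h₁, hA₁⟩ ⟨h₂, hA₂⟩,
    ⟨sInf Ω, hM, hAM, fun _ hW hAW => hM_least ⟨hW, hAW⟩⟩,
    fun _ _ hB hC => hB.inter hC⟩
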